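/- arXiv:2109.11282 — 2 statements merged into one kernel-verified Lean document; each statement's English description precedes it below -/
import Mathlib

section
/- Fix l ∈ ℕ, propensities p₁,…,p_l ∈ (0,1], and a measurable space 𝒳 with measurable singletons. Let 𝔓 be an operator mapping measurable functions f* : {0,1}^l × 𝒳 → ℝ to measurable functions {0,1}^l × 𝒳 → ℝ such that for every probability space, every joint distribution of (X, Y*) with X : Ω → 𝒳, Y* : Ω → {0,1}^l, and masks M : Ω → {0,1}^l with mutually independent coordinates, jointly independent of (X, Y*), ℙ(M_i = 1) = p_i, and Y := M ⊙ Y*, one has 𝔼[f*(Y*, X)] = 𝔼[𝔓(f*)(Y, X)] for all f*. Then 𝔓(f*)(y, x) = (∏_{i ∈ I(y)} 1/p_i) · Σ_{𝒥 ⊆ I(y)} f*(𝟙_𝒥, x) · ∏_{j ∈ I(y) \ 𝒥} (p_j − 1) for all f*, y ∈ {0,1}^l, and x ∈ 𝒳; i.e., the propensity-scoring operator of the multilabel unbiasedness theorem is the unique such operator. -/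
/-!
Test unbiasedness on the deterministic label `Y* = 𝟙_S`, a fixed point `x`, and independent
Bernoulli masks: it gives `f*(𝟙_S, x) = Σ_{J ⊆ S} p^J (1 - p)^{S \ J} 𝔓 f*(𝟙_J, x)`. The right
side is the transform `g ↦ (S ↦ Σ_{J ⊆ S} g J ∏_{S \ J} a)` with weight `a = 1 - p`, applied to
`J ↦ p^J 𝔓 f*(𝟙_J, x)`. These transforms compose by adding weights (binomial expansion of
`∏ (a + b)`), so the transform with weight `p - 1` inverts it, and that inverse is `psML`.
-/

open MeasureTheory ProbabilityTheory

/-- The set of positive labels `I(y) = {i : yᵢ = 1}` of a label vector `y ∈ {0,1}^l`. -/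
noncomputable def posSet {l : ℕ} (y : Fin l → ℝ) : Finset (Fin l) :=
  Finset.univ.filter (fun i => y i = 1)

/-- The indicator vector `𝟙_𝒥 ∈ {0,1}^l` of a subset `𝒥 ⊆ {1,…,l}`. -/
def indVec {l : ℕ} (J : Finset (Fin l)) : Fin l → ℝ := fun i => if i ∈ J then 1 else 0

/-- The propensity-scored version of a general multilabel loss:
`f(y, x) = (∏_{i ∈ I(y)} 1/pᵢ) · Σ_{𝒥 ⊆ I(y)} f*(𝟙_𝒥, x) · ∏_{j ∈ I(y) \ 𝒥} (pⱼ − 1)`. -/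
noncomputable def psML {l : ℕ} {𝒳 : Type*} (p : Fin l → ℝ)
    (fstar : (Fin l → ℝ) → 𝒳 → ℝ) : (Fin l → ℝ) → 𝒳 → ℝ :=
  fun y x => (∏ i ∈ posSet y, (p i)⁻¹) *
    ∑ J ∈ (posSet y).powerset, fstar (indVec J) x * ∏ j ∈ posSet y \ J, (p j - 1)

open Finset

section SubsetTransform

variable {ι R : Type*} [DecidableEq ι] [CommRing R]

def subsetTransform (a : ι → R) (g : Finset ι → R) (S : Finset ι) : R :=
  ∑ J ∈ S.powerset, g J * ∏ i ∈ S \ J, a i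

theorem subsetTransform_zero (g : Finset ι → R) : subsetTransform 0 g = g := by
  funext S
  rw [subsetTransform, sum_eq_single_of_mem S (mem_powerset_self S)]
  · simp
  · intro J hJ hJS
    obtain ⟨i, hi⟩ : (S \ J).Nonempty :=
      sdiff_nonempty.mpr fun hSJ => hJS (subset_antisymm (mem_powerset.mp hJ) hSJ)
    rw [prod_eq_zero hi rfl, mul_zero]

theorem sum_Icc_prod_sdiff_mul_prod_sdiff (a b : ι → R) {K S : Finset ι} (hKS : K ⊆ S) :
    ∑ J ∈ Icc K S, (∏ i ∈ J \ K, b i) * ∏ i ∈ S \ J, a i = ∏ i ∈ S \ K, (a i + b i) := by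
  have hdisj : ∀ T ∈ (S \ K).powerset, Disjoint K T := fun T hT =>
    disjoint_of_subset_right (mem_powerset.mp hT) disjoint_sdiff
  simp_rw [add_comm (a _), prod_add, Icc_eq_image_powerset hKS]
  rw [sum_image fun T hT T' hT' h => by
    simpa [union_sdiff_cancel_left (hdisj T hT), union_sdiff_cancel_left (hdisj T' hT')]
      using congrArg (· \ K) h]
  refine sum_congr rfl fun T hT => ?_
  rw [union_sdiff_cancel_left (hdisj T hT), sdiff_sdiff_left, sup_eq_union]

theorem subsetTransform_subsetTransform (a b : ι → R) (g : Finset ι → R) :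
    subsetTransform a (subsetTransform b g) = subsetTransform (a + b) g := by
  funext S
  simp only [subsetTransform, sum_mul]
  rw [sum_comm' (t' := S.powerset) (s' := fun K => Icc K S) fun J K => by
    simp only [mem_powerset, mem_Icc]
    exact ⟨fun h => ⟨⟨h.2, h.1⟩, h.2.trans h.1⟩, fun h => ⟨h.1.2, h.1.1⟩⟩]
  refine sum_congr rfl fun K hK => ?_
  rw [Pi.add_def, ← sum_Icc_prod_sdiff_mul_prod_sdiff a b (mem_powerset.mp hK), mul_sum]
  exact sum_congr rfl fun J _ => by ring

end SubsetTransform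

section BernoulliMask

variable {ι : Type*}

def maskVec (ω : ι → Bool) : ι → ℝ := fun i => if ω i then 1 else 0

theorem maskVec_eq_zero_or_one (ω : ι → Bool) (i : ι) : maskVec ω i = 0 ∨ maskVec ω i = 1 := by
  cases h : ω i <;> simp [maskVec, h]

variable [Fintype ι] (p : ι → ℝ) (hp : ∀ i, p i ∈ Set.Icc (0 : ℝ) 1)

noncomputable def bernoulliMask : Measure (ι → Bool) :=
  Measure.pi fun i => Ber(true, false, ⟨p i, hp i⟩)

instance : IsProbabilityMeasure (bernoulliMask p hp) := by
  unfold bernoulliMask; infer_instance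

theorem measurable_maskVec : Measurable (maskVec : (ι → Bool) → ι → ℝ) := Measurable.of_discrete

theorem iIndepFun_maskVec : iIndepFun (fun i ω => maskVec ω i) (bernoulliMask p hp) :=
  iIndepFun_pi (X := fun _ (b : Bool) => if b then (1 : ℝ) else 0)
    fun _ => Measurable.of_discrete.aemeasurable

theorem bernoulliMask_maskVec_eq_one (i : ι) :
    bernoulliMask p hp {ω | maskVec ω i = 1} = ENNReal.ofReal (p i) := by
  have hset : {ω : ι → Bool | maskVec ω i = 1} = Function.eval i ⁻¹' ({true} : Set Bool) := by
    ext ω; cases h : ω i <;> simp [maskVec, h]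
  rw [hset, ← Measure.map_apply (measurable_pi_apply i) (measurableSet_singleton _),
    bernoulliMask, (measurePreserving_eval _ i).map_eq,
    bernoulliMeasure_apply_of_mem_of_notMem _ (measurableSet_singleton _) rfl (by simp),
    ENNReal.ofReal_eq_coe_nnreal (hp i).1]
  rfl

variable [DecidableEq ι]

theorem integral_bernoulliMask_prod_boole {S J : Finset ι} (hJS : J ⊆ S) :
    ∫ ω, ∏ i, (if i ∈ S → ω i = decide (i ∈ J) then (1 : ℝ) else 0) ∂bernoulliMask p hp
      = (∏ i ∈ J, p i) * ∏ i ∈ S \ J, (1 - p i) := by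
  rw [bernoulliMask, integral_fintype_prod_eq_prod
    (fun i (b : Bool) => if i ∈ S → b = decide (i ∈ J) then (1 : ℝ) else 0)]
  have hfactor : ∀ i, (p i • if i ∈ S → true = decide (i ∈ J) then (1 : ℝ) else 0) +
      (1 - p i) • (if i ∈ S → false = decide (i ∈ J) then (1 : ℝ) else 0)
        = if i ∈ S then (if i ∈ J then p i else 1 - p i) else 1 := by
    intro i
    by_cases hiS : i ∈ S <;> by_cases hiJ : i ∈ J <;> simp [hiS, hiJ]
  simp_rw [integral_bernoulliMeasure, hfactor]
  rw [prod_ite_mem, univ_inter, prod_ite, filter_mem_eq_inter, inter_eq_right.mpr hJS,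
    filter_notMem_eq_sdiff]

theorem integral_bernoulliMask_filter (S : Finset ι) (F : Finset ι → ℝ) :
    ∫ ω, F (S.filter (ω ·)) ∂bernoulliMask p hp
      = subsetTransform (1 - p) (fun J => (∏ i ∈ J, p i) * F J) S := by
  have hind : ∀ ω : ι → Bool, F (S.filter (ω ·)) = ∑ J ∈ S.powerset,
      F J * ∏ i, (if i ∈ S → ω i = decide (i ∈ J) then (1 : ℝ) else 0) := by
    intro ω
    have hcond : ∀ J ∈ S.powerset, (∀ i ∈ S, ω i = decide (i ∈ J)) ↔ S.filter (ω ·) = J := by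
      intro J hJ
      constructor
      · intro h
        ext i
        by_cases hiS : i ∈ S
        · simp [hiS, h i hiS]
        · simpa [hiS] using mt (mem_powerset.mp hJ ·) hiS
      · rintro rfl i hiS
        simp [hiS]
    simp_rw [prod_boole, mem_univ, true_imp_iff, mul_ite, mul_one, mul_zero]
    rw [sum_congr rfl fun J hJ => if_congr (hcond J hJ) rfl rfl, sum_ite_eq,
      if_pos (mem_powerset.mpr (filter_subset _ S))]
  simp_rw [hind]
  rw [integral_finsetSum _ fun _ _ => Integrable.of_finite]
  refine sum_congr rfl fun J hJ => ?_
  rw [integral_const_mul, integral_bernoulliMask_prod_boole p hp (mem_powerset.mp hJ)]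
  simp only [Pi.sub_apply, Pi.one_apply]
  ring

end BernoulliMask

theorem indVec_eq_zero_or_one {l : ℕ} (J : Finset (Fin l)) (i : Fin l) :
    indVec J i = 0 ∨ indVec J i = 1 := by
  by_cases h : i ∈ J <;> simp [indVec, h]

theorem indVec_posSet {l : ℕ} {y : Fin l → ℝ} (hy : ∀ i, y i = 0 ∨ y i = 1) :
    indVec (posSet y) = y := by
  funext i
  rcases hy i with h | h <;> simp [indVec, posSet, h]

theorem maskVec_mul_indVec {l : ℕ} (ω : Fin l → Bool) (S : Finset (Fin l)) :
    (fun i => maskVec ω i * indVec S i) = indVec (S.filter (ω ·)) := by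
  funext i
  by_cases hi : i ∈ S <;> cases h : ω i <;> simp [maskVec, indVec, hi, h]

theorem psML_eq_mul_subsetTransform {l : ℕ} {𝒳 : Type*} (p : Fin l → ℝ)
    (fstar : (Fin l → ℝ) → 𝒳 → ℝ) (y : Fin l → ℝ) (x : 𝒳) :
    psML p fstar y x = (∏ i ∈ posSet y, (p i)⁻¹) *
      subsetTransform (p - 1) (fun J => fstar (indVec J) x) (posSet y) :=
  rfl

theorem uniqueness_multilabel_ps_general
    {𝒳 : Type*} [MeasurableSpace 𝒳]
    (l : ℕ) (p : Fin l → ℝ) (hp : ∀ i, p i ∈ Set.Ioc (0 : ℝ) 1)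
    (𝔓 : ((Fin l → ℝ) → 𝒳 → ℝ) → ((Fin l → ℝ) → 𝒳 → ℝ))
    (hunbiased : ∀ (Ω : Type) (_ : MeasurableSpace Ω) (P : Measure Ω)
      (_ : IsProbabilityMeasure P)
      (X : Ω → 𝒳) (Ystar M : Ω → Fin l → ℝ),
      Measurable X → Measurable Ystar → Measurable M →
      (∀ ω i, Ystar ω i = 0 ∨ Ystar ω i = 1) →
      (∀ ω i, M ω i = 0 ∨ M ω i = 1) →
      iIndepFun (fun i ω => M ω i) P →
      IndepFun (fun ω => (X ω, Ystar ω)) M P →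
      (∀ i, P {ω | M ω i = 1} = ENNReal.ofReal (p i)) →
      ∀ fstar : (Fin l → ℝ) → 𝒳 → ℝ, Measurable (Function.uncurry fstar) →
        Integrable (fun ω => fstar (Ystar ω) (X ω)) P →
        Integrable (fun ω => 𝔓 fstar (fun i => M ω i * Ystar ω i) (X ω)) P →
        ∫ ω, fstar (Ystar ω) (X ω) ∂P
          = ∫ ω, 𝔓 fstar (fun i => M ω i * Ystar ω i) (X ω) ∂P) :
    ∀ fstar : (Fin l → ℝ) → 𝒳 → ℝ, Measurable (Function.uncurry fstar) →
      ∀ y : Fin l → ℝ, (∀ i, y i = 0 ∨ y i = 1) → ∀ x : 𝒳,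
        𝔓 fstar y x = psML p fstar y x := by
  intro fstar hf y hy x
  have hp01 : ∀ i, p i ∈ Set.Icc (0 : ℝ) 1 := fun i => Set.Ioc_subset_Icc_self (hp i)
  have hF : (fun S => fstar (indVec S) x) =
      subsetTransform (1 - p) (fun J => (∏ i ∈ J, p i) * 𝔓 fstar (indVec J) x) := by
    funext S
    have h := hunbiased (Fin l → Bool) _ (bernoulliMask p hp01) inferInstance (fun _ => x)
      (fun _ => indVec S) maskVec measurable_const measurable_const measurable_maskVec
      (fun _ => indVec_eq_zero_or_one S) maskVec_eq_zero_or_one (iIndepFun_maskVec p hp01)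
      (indepFun_const_left _ _) (bernoulliMask_maskVec_eq_one p hp01) fstar hf
      .of_finite .of_finite
    simp only [integral_const, probReal_univ, one_smul, maskVec_mul_indVec] at h
    rw [h, integral_bernoulliMask_filter p hp01 S fun J => 𝔓 fstar (indVec J) x]
  have hG : (fun J => (∏ i ∈ J, p i) * 𝔓 fstar (indVec J) x) =
      subsetTransform (p - 1) (fun S => fstar (indVec S) x) := by
    rw [hF, subsetTransform_subsetTransform, show p - 1 + (1 - p) = 0 by ring,
      subsetTransform_zero]
  have hprod : ∏ i ∈ posSet y, p i ≠ 0 := prod_ne_zero_iff.mpr fun i _ => (hp i).1.ne'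
  rw [psML_eq_mul_subsetTransform, ← congrFun hG, indVec_posSet hy, ← mul_assoc,
    prod_inv_distrib, inv_mul_cancel₀ hprod, one_mul]

/-- **Uniqueness of the multilabel propensity-scoring operator.** If an operator `𝔓` on
measurable multilabel losses yields unbiased estimates for every probability space and every
joint distribution of `(X, Y*)` with masks `M` having mutually independent coordinates,
jointly independent of `(X, Y*)`, with `ℙ(Mᵢ = 1) = pᵢ` and `Y = M ⊙ Y*`, then `𝔓`
coincides with the propensity-scoring operator `psML p` on `{0,1}^l`-valued labels. -/
theorem uniqueness_multilabel_ps
    {𝒳 : Type*} [MeasurableSpace 𝒳] [MeasurableSingletonClass 𝒳]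
    (l : ℕ) (p : Fin l → ℝ) (hp : ∀ i, p i ∈ Set.Ioc (0 : ℝ) 1)
    (𝔓 : ((Fin l → ℝ) → 𝒳 → ℝ) → ((Fin l → ℝ) → 𝒳 → ℝ))
    (hunbiased : ∀ (Ω : Type) (_ : MeasurableSpace Ω) (P : Measure Ω)
      (_ : IsProbabilityMeasure P)
      (X : Ω → 𝒳) (Ystar M : Ω → Fin l → ℝ),
      Measurable X → Measurable Ystar → Measurable M →
      (∀ ω i, Ystar ω i = 0 ∨ Ystar ω i = 1) →
      (∀ ω i, M ω i = 0 ∨ M ω i = 1) →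
      iIndepFun (fun i ω => M ω i) P →
      IndepFun (fun ω => (X ω, Ystar ω)) M P →
      (∀ i, P {ω | M ω i = 1} = ENNReal.ofReal (p i)) →
      ∀ fstar : (Fin l → ℝ) → 𝒳 → ℝ, Measurable (Function.uncurry fstar) →
        Integrable (fun ω => fstar (Ystar ω) (X ω)) P →
        Integrable (fun ω => 𝔓 fstar (fun i => M ω i * Ystar ω i) (X ω)) P →
        ∫ ω, fstar (Ystar ω) (X ω) ∂P
          = ∫ ω, 𝔓 fstar (fun i => M ω i * Ystar ω i) (X ω) ∂P) :
    ∀ fstar : (Fin l → ℝ) → 𝒳 → ℝ, Measurable (Function.uncurry fstar) →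
      ∀ y : Fin l → ℝ, (∀ i, y i = 0 ∨ y i = 1) → ∀ x : 𝒳,
        𝔓 fstar y x = psML p fstar y x :=
  uniqueness_multilabel_ps_general l p hp 𝔓 hunbiased
end

section
/- Let (Ω, ℙ) carry the multilabel masking model with l labels and propensities p₁,…,p_l ∈ (0,1]. For i ∈ {1,…,l}, define T*_i := Y*_i / (Σ_{j=1}^l Y*_j) (with the convention that the quotient is 0 when the denominator is 0) and, for y ∈ {0,1}^l, define T_i(y) := (∏_{j ∈ I(y)} 1/p_j) · Σ_{𝒥 ⊆ I(y)} (𝟙[i ∈ 𝒥]/|𝒥|) · ∏_{k ∈ I(y) \ 𝒥} (p_k − 1). Then 𝔼[T_i(Y)] = 𝔼[T*_i]. -/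
open MeasureTheory ProbabilityTheory

/-- The unbiased estimator `T_i(y)` of the normalized label `T*_i = Y*_i / Σⱼ Y*_j`:
`T_i(y) = (∏_{j ∈ I(y)} 1/pⱼ) · Σ_{𝒥 ⊆ I(y)} (𝟙[i ∈ 𝒥]/|𝒥|) · ∏_{k ∈ I(y) \ 𝒥} (p_k − 1)`. -/
noncomputable def Tps {l : ℕ} (p : Fin l → ℝ) (i : Fin l) (y : Fin l → ℝ) : ℝ :=
  (∏ j ∈ posSet y, (p j)⁻¹) *
    ∑ J ∈ (posSet y).powerset,
      ((if i ∈ J then (1 : ℝ) else 0) / (J.card : ℝ)) * ∏ k ∈ posSet y \ J, (p k - 1)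

/-!
Write `f J = 𝟙[i ∈ J] / |J|`, so that `T*_i = f (I(Y*))`. Condition on the true labels: if
`I(Y*) = A`, the observed positive set is `A ∩ I(M)`, a random subset of `A` containing each `k`
independently with probability `p k`. Its probability `∏_{S} p · ∏_{A \ S} (1 - p)` cancels the
prefactor `∏_{S} p⁻¹` of `T_i`, and what is left,
`Σ_{S ⊆ A} ∏_{A \ S} (1 - p) · Σ_{J ⊆ S} f J · ∏_{S \ J} (p - 1)`, is the composite of the
transforms `f ↦ Σ_{J ⊆ S} f J · ∏_{S \ J} c` for `c = p - 1` and `c = 1 - p`. These are inverse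
to each other, because `∏_{A \ J} (c + (-c))` vanishes unless `J = A`. Hence the conditional
expectation of `T_i(Y)` is `f A`.
-/

open Finset

section PowersetTransform

variable {ι R : Type*} [DecidableEq ι] [CommRing R]

def powersetTransform (c : ι → R) (f : Finset ι → R) (A : Finset ι) : R :=
  ∑ S ∈ A.powerset, f S * ∏ k ∈ A \ S, c k

theorem sum_powerset_sum_powerset_comm {M : Type*} [AddCommMonoid M] (A : Finset ι)
    (g : Finset ι → Finset ι → M) :
    ∑ S ∈ A.powerset, ∑ J ∈ S.powerset, g J S
      = ∑ J ∈ A.powerset, ∑ D ∈ (A \ J).powerset, g J (J ∪ D) := by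
  rw [sum_comm' (t' := A.powerset) (s' := fun J => Icc J A)]
  · refine sum_congr rfl fun J hJ => ?_
    rw [Icc_eq_image_powerset (mem_powerset.1 hJ), sum_image]
    intro D hD D' hD' h
    have hdisj : ∀ {D}, D ∈ (A \ J).powerset → Disjoint J D := fun hD =>
      disjoint_of_subset_right (mem_powerset.1 hD) disjoint_sdiff
    rw [← union_sdiff_cancel_left (hdisj hD), ← union_sdiff_cancel_left (hdisj hD')]
    exact congrArg (· \ J) h
  · intro S J
    simp only [mem_powerset, mem_Icc]
    tauto

theorem powersetTransform_neg_powersetTransform (c : ι → R) (f : Finset ι → R) :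
    powersetTransform (fun k => -c k) (powersetTransform c f) = f := by
  funext A
  simp only [powersetTransform, sum_mul, mul_assoc]
  rw [sum_powerset_sum_powerset_comm]
  have hinner : ∀ J ∈ A.powerset, ∑ D ∈ (A \ J).powerset,
      (∏ k ∈ (J ∪ D) \ J, c k) * ∏ k ∈ A \ (J ∪ D), -c k = if J = A then 1 else 0 := by
    intro J hJ
    calc _ = ∑ D ∈ (A \ J).powerset, (∏ k ∈ D, c k) * ∏ k ∈ (A \ J) \ D, -c k := by
          refine sum_congr rfl fun D hD => ?_
          rw [union_sdiff_cancel_left (disjoint_of_subset_right (mem_powerset.1 hD) disjoint_sdiff),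
            sdiff_sdiff_left, sup_eq_union]
      _ = ∏ k ∈ A \ J, (c k + -c k) := (prod_add _ _ _).symm
      _ = if J = A then 1 else 0 := by
          split_ifs with hJA
          · simp [hJA]
          · obtain ⟨k, hk⟩ : (A \ J).Nonempty := by
              rw [sdiff_nonempty]
              exact fun hAJ => hJA (subset_antisymm (mem_powerset.1 hJ) hAJ)
            exact prod_eq_zero hk (add_neg_cancel _)
  simp only [← mul_sum]
  rw [sum_congr rfl fun J hJ => congrArg (f J * ·) (hinner J hJ)]
  simp

/-- The probability that the random subset of `A` containing each `k` independently with
probability `p k` equals `S`. -/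
def bernoulliWeight (p : ι → R) (A S : Finset ι) : R :=
  ∏ k ∈ A, if k ∈ S then p k else 1 - p k

theorem bernoulliWeight_of_subset {p : ι → R} {A S : Finset ι} (hS : S ⊆ A) :
    bernoulliWeight p A S = (∏ k ∈ S, p k) * ∏ k ∈ A \ S, (1 - p k) := by
  rw [bernoulliWeight, prod_ite, filter_mem_eq_inter, inter_eq_right.2 hS, filter_not,
    filter_mem_eq_inter, inter_eq_right.2 hS]

end PowersetTransform

section Debias

variable {ι K : Type*} [DecidableEq ι] [Field K] {p : ι → K} {A : Finset ι}

/-- `Tps p i y` is `debias p (fun J => 𝟙[i ∈ J] / |J|) (posSet y)`. -/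
def debias (p : ι → K) (f : Finset ι → K) (S : Finset ι) : K :=
  (∏ k ∈ S, (p k)⁻¹) * powersetTransform (fun k => p k - 1) f S

theorem sum_bernoulliWeight_mul_debias (hp : ∀ k ∈ A, p k ≠ 0) (f : Finset ι → K) :
    ∑ S ∈ A.powerset, bernoulliWeight p A S * debias p f S = f A := by
  calc _ = ∑ S ∈ A.powerset,
        powersetTransform (fun k => p k - 1) f S * ∏ k ∈ A \ S, -(p k - 1) := by
        refine sum_congr rfl fun S hS => ?_
        have hSA := mem_powerset.1 hS
        have hcancel : (∏ k ∈ S, p k) * ∏ k ∈ S, (p k)⁻¹ = 1 := by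
          rw [← prod_mul_distrib]
          exact prod_eq_one fun k hk => mul_inv_cancel₀ (hp k (hSA hk))
        simp only [bernoulliWeight_of_subset hSA, debias, neg_sub]
        linear_combination
          (∏ k ∈ A \ S, (1 - p k)) * powersetTransform (fun k => p k - 1) f S * hcancel
    _ = f A := congrFun (powersetTransform_neg_powersetTransform _ f) A

end Debias

section Probability

variable {Ω α β : Type*} [MeasurableSpace Ω] {P : Measure Ω}
  [Fintype α] [MeasurableSpace α] [MeasurableSingletonClass α]
  [Fintype β] [MeasurableSpace β] [MeasurableSingletonClass β]

theorem integral_comp_eq_sum_measureReal [IsFiniteMeasure P] {W : Ω → α} (hW : Measurable W)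
    (h : α → ℝ) : ∫ ω, h (W ω) ∂P = ∑ a, P.real (W ⁻¹' {a}) * h a := by
  rw [← integral_map hW.aemeasurable (Integrable.of_finite).aestronglyMeasurable,
    integral_fintype Integrable.of_finite]
  simp [map_measureReal_apply hW (measurableSet_singleton _)]

theorem ProbabilityTheory.IndepFun.integral_comp_eq_sum [IsFiniteMeasure P]
    {U : Ω → α} {V : Ω → β}
    (hUV : IndepFun U V P) (hU : Measurable U) (hV : Measurable V) (G : α → β → ℝ) :
    ∫ ω, G (U ω) (V ω) ∂P = ∑ a, P.real (U ⁻¹' {a}) * ∫ ω, G a (V ω) ∂P := by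
  have hprod (a : α) (b : β) :
      P.real ((fun ω => (U ω, V ω)) ⁻¹' {(a, b)}) = P.real (U ⁻¹' {a}) * P.real (V ⁻¹' {b}) := by
    rw [← Set.singleton_prod_singleton, Set.mk_preimage_prod, measureReal_def,
      hUV.measure_inter_preimage_eq_mul _ _ (measurableSet_singleton a)
        (measurableSet_singleton b), ENNReal.toReal_mul, measureReal_def, measureReal_def]
  simp_rw [integral_comp_eq_sum_measureReal (hU.prodMk hV) (fun x => G x.1 x.2),
    integral_comp_eq_sum_measureReal hV, Fintype.sum_prod_type, hprod, mul_sum, mul_assoc]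

end Probability

section Masking

variable {l : ℕ}

theorem mem_posSet {y : Fin l → ℝ} {i : Fin l} : i ∈ posSet y ↔ y i = 1 := by
  simp [posSet]

theorem measurable_posSet : Measurable (posSet : (Fin l → ℝ) → Finset (Fin l)) := by
  refine measurable_finset_iff.2 fun k => ?_
  simp_rw [mem_posSet]
  exact measurableSet_setOfPred.1 ((measurable_pi_apply k) (measurableSet_singleton 1))

theorem posSet_mul {m : Fin l → ℝ} (hm : ∀ j, m j = 0 ∨ m j = 1) (y : Fin l → ℝ) :
    posSet (fun j => m j * y j) = posSet y ∩ posSet m := by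
  ext j
  rcases hm j with h | h <;> simp [mem_posSet, h]

theorem sum_eq_card_posSet {y : Fin l → ℝ} (hy : ∀ j, y j = 0 ∨ y j = 1) :
    ∑ j, y j = (posSet y).card := by
  rw [posSet, Finset.card_filter, Nat.cast_sum]
  refine Finset.sum_congr rfl fun j _ => ?_
  rcases hy j with h | h <;> simp [h]

theorem apply_eq_ite_mem_posSet {y : Fin l → ℝ} (hy : ∀ j, y j = 0 ∨ y j = 1) (i : Fin l) :
    y i = if i ∈ posSet y then 1 else 0 := by
  rcases hy i with h | h <;> simp [mem_posSet, h]

variable {Ω : Type*} [MeasurableSpace Ω] {P : Measure Ω} [IsProbabilityMeasure P]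
  {M : Ω → Fin l → ℝ} {p : Fin l → ℝ}

theorem measureReal_inter_posSet_eq_bernoulliWeight
    (hM : Measurable M) (hMindep : iIndepFun (fun k ω => M ω k) P)
    (hMp : ∀ k, P.real {ω | M ω k = 1} = p k)
    {A S : Finset (Fin l)} (hS : S ⊆ A) :
    P.real {ω | A ∩ posSet (M ω) = S} = bernoulliWeight p A S := by
  have hset : {ω | A ∩ posSet (M ω) = S}
      = ⋂ k ∈ A, (fun ω => M ω k) ⁻¹' {x | x = 1 ↔ k ∈ S} := by
    ext ω
    simp only [Set.mem_ofPred_eq, Set.mem_iInter, Set.mem_preimage, Finset.ext_iff,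
      Finset.mem_inter, mem_posSet]
    exact ⟨fun h k hk => by rw [← h k, and_iff_right hk],
      fun h k => ⟨fun hk => (h k hk.1).1 hk.2, fun hk => ⟨hS hk, (h k (hS hk)).2 hk⟩⟩⟩
  have hfactor (k : Fin l) :
      P.real ((fun ω => M ω k) ⁻¹' {x | x = 1 ↔ k ∈ S}) = if k ∈ S then p k else 1 - p k := by
    have hmeas : MeasurableSet {ω | M ω k = 1} :=
      (measurable_pi_apply k).comp hM (measurableSet_singleton 1)
    split_ifs with hk
    · rw [← hMp k]
      congr 1
      ext ω
      simp [hk]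
    · rw [← hMp k, ← probReal_compl_eq_one_sub hmeas]
      congr 1
      ext ω
      simp [hk]
  have hmeasS (k : Fin l) : MeasurableSet {x : ℝ | x = 1 ↔ k ∈ S} := by
    by_cases hk : k ∈ S
    · simp only [hk, iff_true]
      exact measurableSet_singleton 1
    · simp only [hk, iff_false]
      exact (measurableSet_singleton 1).compl
  rw [hset, measureReal_def, hMindep.measure_inter_preimage_eq_mul _ fun k _ => hmeasS k,
    ENNReal.toReal_prod]
  exact Finset.prod_congr rfl fun k _ => hfactor k

theorem integral_comp_inter_posSet (hM : Measurable M)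
    (hMindep : iIndepFun (fun k ω => M ω k) P) (hMp : ∀ k, P.real {ω | M ω k = 1} = p k)
    (A : Finset (Fin l)) (h : Finset (Fin l) → ℝ) :
    ∫ ω, h (A ∩ posSet (M ω)) ∂P = ∑ S ∈ A.powerset, bernoulliWeight p A S * h S := by
  rw [integral_comp_eq_sum_measureReal (W := fun ω => A ∩ posSet (M ω))
    ((measurable_of_countable (A ∩ ·)).comp (measurable_posSet.comp hM)),
    ← sum_subset (subset_univ A.powerset)]
  · refine sum_congr rfl fun S hS => ?_
    rw [← measureReal_inter_posSet_eq_bernoulliWeight hM hMindep hMp (mem_powerset.1 hS)]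
    rfl
  · intro S _ hS
    have hempty : (fun ω => A ∩ posSet (M ω)) ⁻¹' {S} = ∅ := by
      ext ω
      simp only [Set.mem_preimage, Set.mem_singleton_iff, Set.mem_empty_iff_false, iff_false]
      rintro rfl
      exact hS (mem_powerset.2 inter_subset_left)
    simp [hempty]

end Masking

theorem unbiased_normalized_label_general
    {Ω : Type*} [MeasurableSpace Ω] (P : Measure Ω) [IsProbabilityMeasure P]
    {𝒳 : Type*} [MeasurableSpace 𝒳]
    (l : ℕ) (X : Ω → 𝒳) (Ystar M : Ω → Fin l → ℝ)
    (hYstar : Measurable Ystar) (hM : Measurable M)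
    (hYstar01 : ∀ ω i, Ystar ω i = 0 ∨ Ystar ω i = 1)
    (hM01 : ∀ ω i, M ω i = 0 ∨ M ω i = 1)
    (p : Fin l → ℝ) (hp : ∀ i, p i ∈ Set.Ioc (0 : ℝ) 1)
    (hMindep : iIndepFun (m := fun _ : Fin l => (inferInstance : MeasurableSpace ℝ))
      (fun i ω => M ω i) P)
    (hindep : IndepFun (fun ω => (X ω, Ystar ω)) M P)
    (hMp : ∀ i, P {ω | M ω i = 1} = ENNReal.ofReal (p i))
    (i : Fin l) :
    ∫ ω, Tps p i (fun j => M ω j * Ystar ω j) ∂P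
      = ∫ ω, Ystar ω i / ∑ j, Ystar ω j ∂P := by
  set F : Finset (Fin l) → ℝ := fun J => (if i ∈ J then 1 else 0) / J.card
  have hMp_real (k : Fin l) : P.real {ω | M ω k = 1} = p k := by
    rw [measureReal_def, hMp k, ENNReal.toReal_ofReal (hp k).1.le]
  have hU : Measurable fun ω => posSet (Ystar ω) := measurable_posSet.comp hYstar
  have hUV : IndepFun (fun ω => posSet (Ystar ω)) (fun ω => posSet (M ω)) P :=
    (hindep.comp measurable_snd measurable_id).comp measurable_posSet measurable_posSet
  calc ∫ ω, Tps p i (fun j => M ω j * Ystar ω j) ∂P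
      = ∫ ω, debias p F (posSet (Ystar ω) ∩ posSet (M ω)) ∂P := by
        simp_rw [← posSet_mul (hM01 _)]
        rfl
    _ = ∑ A, P.real ((fun ω => posSet (Ystar ω)) ⁻¹' {A}) *
          ∫ ω, debias p F (A ∩ posSet (M ω)) ∂P :=
        hUV.integral_comp_eq_sum hU (measurable_posSet.comp hM) fun A B => debias p F (A ∩ B)
    _ = ∑ A, P.real ((fun ω => posSet (Ystar ω)) ⁻¹' {A}) * F A := by
        simp_rw [integral_comp_inter_posSet hM hMindep hMp_real,
          sum_bernoulliWeight_mul_debias fun k _ => (hp k).1.ne']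
    _ = ∫ ω, Ystar ω i / ∑ j, Ystar ω j ∂P := by
        rw [← integral_comp_eq_sum_measureReal hU F]
        congr with ω
        rw [sum_eq_card_posSet (hYstar01 ω), apply_eq_ite_mem_posSet (hYstar01 ω) i]

/-- **Unbiased estimation of normalized labels.** Under the multilabel masking model with
`l` labels and propensities `p i ∈ (0,1]`, for each `i`,
`𝔼[T_i(Y)] = 𝔼[Y*_i / Σⱼ Y*_j]` (quotient `0` when the denominator is `0`), where
`Y = M ⊙ Y*`. -/
theorem unbiased_normalized_label
    {Ω : Type*} [MeasurableSpace Ω] (P : Measure Ω) [IsProbabilityMeasure P]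
    {𝒳 : Type*} [MeasurableSpace 𝒳]
    (l : ℕ) (X : Ω → 𝒳) (Ystar M : Ω → Fin l → ℝ)
    (hX : Measurable X) (hYstar : Measurable Ystar) (hM : Measurable M)
    (hYstar01 : ∀ ω i, Ystar ω i = 0 ∨ Ystar ω i = 1)
    (hM01 : ∀ ω i, M ω i = 0 ∨ M ω i = 1)
    (p : Fin l → ℝ) (hp : ∀ i, p i ∈ Set.Ioc (0 : ℝ) 1)
    (hMindep : iIndepFun (m := fun _ : Fin l => (inferInstance : MeasurableSpace ℝ))
      (fun i ω => M ω i) P)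
    (hindep : IndepFun (fun ω => (X ω, Ystar ω)) M P)
    (hMp : ∀ i, P {ω | M ω i = 1} = ENNReal.ofReal (p i))
    (i : Fin l) :
    ∫ ω, Tps p i (fun j => M ω j * Ystar ω j) ∂P
      = ∫ ω, Ystar ω i / ∑ j, Ystar ω j ∂P :=
  unbiased_normalized_label_general P l X Ystar M hYstar hM hYstar01 hM01 p hp hMindep hindep hMp i
end
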